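/- For all smooth vector fields A, B: ℝ³ → ℝ³ the quasi-isomorphism relation determining b̃₂ on two gauge fields holds: for each index a, Σ_{i,b,c} v_i ε_{abc}( A_c ∂_bB_i + ∂_bA_i B_c ) = −(v·B)(curl A)_a − (v·A)(curl B)_a + ( curl( (v·A)B + (v·B)A ) )_a; equivalently b̃₂(A,B) = F₂(curl A, B) + F₂(A, curl B) − b₁(F₂(A,B)) with b₁ = curl on gauge fields. -/

import Mathlib

/-! The identity is the Leibniz rule `curl (f B) = f curl B + ∇f × B` applied to
`(v·A) B + (v·B) A`: the terms `(v·A) curl B + (v·B) curl A` cancel, leaving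
`∇(v·A) × B + ∇(v·B) × A`, which is `b̃₂(A,B)` since `∂_b (v·A) = Σ_i v_i ∂_b A_i`.
No property of `ε` enters: only linearity of `curl` in the partial derivatives. -/

/- STATEMENT 2: quasi-isomorphism relation determining b̃₂ on two gauge fields:
b̃₂(A,B) = F₂(curl A, B) + F₂(A, curl B) − b₁(F₂(A,B)) with b₁ = curl. -/

noncomputable section

abbrev V3 := Fin 3 → ℝ

/-- Partial derivative ∂_i f at x. -/
def pd (f : V3 → ℝ) (i : Fin 3) (x : V3) : ℝ :=
  fderiv ℝ f x (Pi.single i 1)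

/-- Levi-Civita symbol ε_{abc} on Fin 3. -/
def eps (a b c : Fin 3) : ℝ :=
  (((b : ℕ) : ℝ) - ((a : ℕ) : ℝ)) * (((c : ℕ) : ℝ) - ((b : ℕ) : ℝ)) *
    (((c : ℕ) : ℝ) - ((a : ℕ) : ℝ)) / 2

/-- (curl A)_a = Σ_{b,c} ε_{abc} ∂_b A_c. -/
def curl (A : V3 → V3) (a : Fin 3) (x : V3) : ℝ :=
  ∑ b, ∑ c, eps a b c * pd (fun y => A y c) b x

/-- b̃₂(A,B)_a = Σ_{i,b,c} v_i ε_{abc}(A_c ∂_b B_i + ∂_b A_i B_c). -/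
def b2g (v : V3) (A B : V3 → V3) (x : V3) (a : Fin 3) : ℝ :=
  ∑ i, ∑ b, ∑ c, v i * eps a b c *
    (A x c * pd (fun y => B y i) b x + pd (fun y => A y i) b x * B x c)

section PartialDerivatives

variable {f g : V3 → ℝ} {x : V3}

lemma pd_add (hf : DifferentiableAt ℝ f x) (hg : DifferentiableAt ℝ g x) (b : Fin 3) :
    pd (fun y => f y + g y) b x = pd f b x + pd g b x := by
  simp [pd, fderiv_fun_add hf hg]

lemma pd_mul (hf : DifferentiableAt ℝ f x) (hg : DifferentiableAt ℝ g x) (b : Fin 3) :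
    pd (fun y => f y * g y) b x = pd f b x * g x + f x * pd g b x := by
  simp [pd, fderiv_fun_mul hf hg]
  ring

lemma pd_weighted_sum {A : V3 → V3} (hA : DifferentiableAt ℝ A x) (v : V3) (b : Fin 3) :
    pd (fun y => ∑ i, v i * A y i) b x = ∑ i, v i * pd (fun y => A y i) b x := by
  have hAi (i : Fin 3) : DifferentiableAt ℝ (fun y => A y i) x := differentiableAt_pi.mp hA i
  simp [pd, fderiv_fun_sum fun i _ => (hAi i).const_mul (v i), fderiv_const_mul (hAi _)]

end PartialDerivatives

section Curl

variable {F G : V3 → V3} {f : V3 → ℝ} {x : V3}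

lemma curl_add (hF : DifferentiableAt ℝ F x) (hG : DifferentiableAt ℝ G x) (a : Fin 3) :
    curl (fun y c => F y c + G y c) a x = curl F a x + curl G a x := by
  simp only [curl, pd_add (differentiableAt_pi.mp hF _) (differentiableAt_pi.mp hG _), mul_add,
    Finset.sum_add_distrib]

lemma curl_mul (hf : DifferentiableAt ℝ f x) (hF : DifferentiableAt ℝ F x) (a : Fin 3) :
    curl (fun y c => f y * F y c) a x
      = f x * curl F a x + ∑ b, ∑ c, eps a b c * (pd f b x * F x c) := by
  simp only [curl, pd_mul hf (differentiableAt_pi.mp hF _), Finset.mul_sum,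
    ← Finset.sum_add_distrib]
  exact Finset.sum_congr rfl fun b _ => Finset.sum_congr rfl fun c _ => by ring

end Curl

lemma b2g_eq_sum_eps_pd_dot {A B : V3 → V3} {x : V3} (hA : DifferentiableAt ℝ A x)
    (hB : DifferentiableAt ℝ B x) (v : V3) (a : Fin 3) :
    b2g v A B x a
      = ∑ b, ∑ c, eps a b c * (pd (fun y => ∑ i, v i * A y i) b x * B x c)
        + ∑ b, ∑ c, eps a b c * (pd (fun y => ∑ i, v i * B y i) b x * A x c) := by
  simp only [b2g, pd_weighted_sum hA, pd_weighted_sum hB]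
  simp only [Fin.sum_univ_three]
  ring

theorem deformed_CS_QISO_b2_on_gauge_fields
    (v : V3) (A B : V3 → V3)
    (hA : ContDiff ℝ (⊤ : ℕ∞) A) (hB : ContDiff ℝ (⊤ : ℕ∞) B) :
    ∀ (a : Fin 3) (x : V3),
      b2g v A B x a
        = -(∑ i, v i * B x i) * curl A a x
          - (∑ i, v i * A x i) * curl B a x
          + curl (fun y b =>
              (∑ i, v i * A y i) * B y b + (∑ i, v i * B y i) * A y b) a x := by
  intro a x
  have hAx : DifferentiableAt ℝ A x := hA.differentiable (by simp) x
  have hBx : DifferentiableAt ℝ B x := hB.differentiable (by simp) x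
  have hvA : DifferentiableAt ℝ (fun y => ∑ i, v i * A y i) x := by fun_prop
  have hvB : DifferentiableAt ℝ (fun y => ∑ i, v i * B y i) x := by fun_prop
  have hvAB : DifferentiableAt ℝ (fun y c => (∑ i, v i * A y i) * B y c) x := hvA.smul hBx
  have hvBA : DifferentiableAt ℝ (fun y c => (∑ i, v i * B y i) * A y c) x := hvB.smul hAx
  rw [b2g_eq_sum_eps_pd_dot hAx hBx, curl_add hvAB hvBA, curl_mul hvA hBx, curl_mul hvB hAx]
  ring
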